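/- Combining the above: if w(x) = p_te(x)/p_tr(x) ≤ β and g(x) = 1/(1+w(x)), then for any estimator ĝ: X → [1/(1+β), 1] with ŵ = (1−ĝ)/ĝ, we have E_{p_tr}[(w(x) − ŵ(x))²] ≤ 2(1+β)⁴ E_p[(g(x) − ĝ(x))²], where p = (1/2)p_tr + (1/2)p_te. -/

import Mathlib

open MeasureTheory

/-- The training expectation of the squared density-ratio estimation error is
bounded by `2(1+β)^4` times the mixture expectation of the squared
discriminator error. -/
theorem ratio_error_expectation_bound
    {X : Type*} [MeasurableSpace X] (μ : Measure X)
    (ptr pte : X → ℝ) (β : ℝ) (hβ : 0 < β)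
    (hptr_pos : ∀ x, 0 < ptr x) (hpte_nonneg : ∀ x, 0 ≤ pte x)
    (w : X → ℝ) (hw : ∀ x, w x = pte x / ptr x)
    (hwβ : ∀ x, w x ≤ β)
    (g : X → ℝ) (hg : ∀ x, g x = 1 / (1 + w x))
    (ghat : X → ℝ) (hghat : ∀ x, ghat x ∈ Set.Icc (1 / (1 + β)) 1)
    (what : X → ℝ) (hwhat : ∀ x, what x = (1 - ghat x) / ghat x)
    (p : X → ℝ) (hp : ∀ x, p x = (1 / 2) * ptr x + (1 / 2) * pte x)
    (hint₁ : Integrable (fun x => (w x - what x) ^ 2 * ptr x) μ)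
    (hint₂ : Integrable (fun x => (g x - ghat x) ^ 2 * p x) μ) :
    ∫ x, (w x - what x) ^ 2 * ptr x ∂μ
      ≤ 2 * (1 + β) ^ 4 * ∫ x, (g x - ghat x) ^ 2 * p x ∂μ := by
  have key : ∀ x, (w x - what x) ^ 2 * ptr x
      ≤ 2 * (1 + β) ^ 4 * ((g x - ghat x) ^ 2 * p x) := by
    intro x
    have hβ1 : (0:ℝ) < 1 + β := by linarith
    have hw0 : 0 ≤ w x := by
      rw [hw]; exact div_nonneg (hpte_nonneg x) (hptr_pos x).le
    have h1w : (0:ℝ) < 1 + w x := by linarith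
    have hgpos : 0 < g x := by rw [hg]; positivity
    have hglb : 1 / (1 + β) ≤ g x := by
      rw [hg]
      apply one_div_le_one_div_of_le h1w
      linarith [hwβ x]
    obtain ⟨hglb2, hgub2⟩ := hghat x
    have hgpos2 : 0 < ghat x := lt_of_lt_of_le (by positivity) hglb2
    have hdiff : w x - what x = (ghat x - g x) / (g x * ghat x) := by
      rw [hwhat, hw]
      have hwval : w x = 1 / g x - 1 := by
        rw [hg]; field_simp; ring
      rw [hw] at hwval
      rw [hwval]
      field_simp
      ring
    have hsq : (w x - what x) ^ 2 = (g x - ghat x) ^ 2 / (g x * ghat x) ^ 2 := by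
      rw [hdiff, div_pow]; ring_nf
    have hprod : 1 / (1 + β) * (1 / (1 + β)) ≤ g x * ghat x :=
      mul_le_mul hglb hglb2 (by positivity) hgpos.le
    have hfrac : (g x - ghat x) ^ 2 / (g x * ghat x) ^ 2
        ≤ (g x - ghat x) ^ 2 * (1 + β) ^ 4 := by
      rw [div_le_iff₀ (by positivity)]
      have h2 : (1 / (1 + β) * (1 / (1 + β))) ^ 2 ≤ (g x * ghat x) ^ 2 := by
        apply pow_le_pow_left₀ (by positivity) hprod
      calc (g x - ghat x) ^ 2 = (g x - ghat x) ^ 2 * (1 + β) ^ 4 *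
            (1 / (1 + β) * (1 / (1 + β))) ^ 2 := by field_simp
        _ ≤ (g x - ghat x) ^ 2 * (1 + β) ^ 4 * (g x * ghat x) ^ 2 := by
            apply mul_le_mul_of_nonneg_left h2 (by positivity)
    have hp2 : ptr x ≤ 2 * p x := by
      rw [hp]; linarith [hpte_nonneg x, hptr_pos x]
    calc (w x - what x) ^ 2 * ptr x
        ≤ ((g x - ghat x) ^ 2 * (1 + β) ^ 4) * ptr x := by
          rw [hsq]; exact mul_le_mul_of_nonneg_right hfrac (hptr_pos x).le
      _ ≤ ((g x - ghat x) ^ 2 * (1 + β) ^ 4) * (2 * p x) := by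
          apply mul_le_mul_of_nonneg_left hp2 (by positivity)
      _ = 2 * (1 + β) ^ 4 * ((g x - ghat x) ^ 2 * p x) := by ring
  calc ∫ x, (w x - what x) ^ 2 * ptr x ∂μ
      ≤ ∫ x, 2 * (1 + β) ^ 4 * ((g x - ghat x) ^ 2 * p x) ∂μ :=
        integral_mono hint₁ (hint₂.const_mul _) key
    _ = 2 * (1 + β) ^ 4 * ∫ x, (g x - ghat x) ^ 2 * p x ∂μ :=
        MeasureTheory.integral_const_mul _ _
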